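/- Let N and N₀ be positive integers with N ≥ N₀. For i = 1, …, N let α_i ∈ [0, 1] and b_i ∈ ℝ with b_i ≥ 0. Assume that ∑_{i=1}^{N} α_i ≥ N₀. Let (b_i*)_{i=1}^{N} denote the sequence (b_i) rearranged in increasing order. Then ∑_{i=1}^{N} α_i b_i ≥ ∑_{i=1}^{N₀} b_i*. -/

import Mathlib

/-!
Let `t` be the `N₀`-th smallest value of `b` and `S` the set of indices of the `N₀` smallest values.
For every `i`, `(α i - 𝟙_S i) * (b i - t) ≥ 0`: both factors are `≤ 0` on `S` and `≥ 0` off `S`.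
Summing gives `∑ α b - ∑_S b ≥ t (∑ α - N₀) ≥ 0`.
-/

open Finset

theorem sum_le_sum_mul_of_threshold {ι R : Type*} [Fintype ι] [DecidableEq ι]
    [Field R] [LinearOrder R] [IsStrictOrderedRing R] (S : Finset ι) (α b : ι → R) (t : R)
    (ht : 0 ≤ t) (hα : ∀ i, α i ∈ Set.Icc (0 : R) 1)
    (hlow : ∀ i ∈ S, b i ≤ t) (hhigh : ∀ i ∉ S, t ≤ b i) (hcard : (#S : R) ≤ ∑ i, α i) :
    ∑ i ∈ S, b i ≤ ∑ i, α i * b i := by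
  have hterm : ∀ i, 0 ≤ (α i - if i ∈ S then 1 else 0) * (b i - t) := by
    intro i
    by_cases hi : i ∈ S
    · simp only [hi, if_true]
      exact mul_nonneg_of_nonpos_of_nonpos (by linarith [(hα i).2]) (by linarith [hlow i hi])
    · simp only [hi, if_false, sub_zero]
      exact mul_nonneg (hα i).1 (by linarith [hhigh i hi])
  have hsum := sum_nonneg fun i (_ : i ∈ univ) => hterm i
  simp only [sub_mul, mul_sub, ite_mul, one_mul, zero_mul, sum_sub_distrib,
    sum_ite_mem, univ_inter, ← sum_mul, sum_const, nsmul_eq_mul] at hsum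
  linarith [mul_nonneg (sub_nonneg.2 hcard) ht]

theorem stmt_19 (N N₀ : ℕ) (hN₀ : 1 ≤ N₀) (hN : N₀ ≤ N)
    (α b : Fin N → ℝ) (hα : ∀ i, α i ∈ Set.Icc (0 : ℝ) 1) (hb : ∀ i, 0 ≤ b i)
    (hsum : (N₀ : ℝ) ≤ ∑ i, α i)
    -- `b ∘ σ` is the increasing rearrangement of `b`:
    (σ : Equiv.Perm (Fin N)) (hσ : Monotone (b ∘ σ)) :
    ∑ i ∈ Finset.univ.filter (fun i : Fin N => (i : ℕ) < N₀), b (σ i)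
      ≤ ∑ i, α i * b i := by
  set S := (univ.filter fun i : Fin N => (i : ℕ) < N₀).map σ.toEmbedding
  have hmem : ∀ i, i ∈ S ↔ ((σ.symm i : Fin N) : ℕ) < N₀ := fun i => by simp [S]
  let k : Fin N := ⟨N₀ - 1, by omega⟩
  have hlow : ∀ i ∈ S, b i ≤ b (σ k) := fun i hi => by
    have hi' := (hmem i).1 hi
    simpa using hσ (show σ.symm i ≤ k from Fin.le_iff_val_le_val.2 (by simp only [k]; omega))
  have hhigh : ∀ i ∉ S, b (σ k) ≤ b i := fun i hi => by
    have hi' := (hmem i).not.1 hi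
    simpa using hσ (show k ≤ σ.symm i from Fin.le_iff_val_le_val.2 (by simp only [k]; omega))
  have hcard : (#S : ℝ) ≤ ∑ i, α i := by
    rw [card_map, Fin.card_filter_val_lt]
    exact le_trans (by exact_mod_cast min_le_right N N₀) hsum
  calc _ = ∑ i ∈ S, b i := (sum_map _ σ.toEmbedding b).symm
    _ ≤ ∑ i, α i * b i := sum_le_sum_mul_of_threshold S α b _ (hb _) hα hlow hhigh hcard
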